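/- Let P be a convex set of probability measures on a Polish space Ω, ΔS : Ω → ℝ^d Borel, and H ⊆ ℝ^d such that the generated projected cone C_H(P) is convex and closed. Then NA(P) holds (i.e., for every H ∈ H, H·ΔS ≥ 0 P-q.s. implies H·ΔS = 0 P-q.s.) if and only if for every P ∈ P there exists a probability measure Q with P ≪ Q, Q absolutely continuous with respect to some member of P, E_Q|ΔS| < ∞, and E_Q[H·ΔS] ≤ 0 for all H ∈ H. -/

import Mathlib

/-!
Easy direction: a `Q` with `P ≪ Q ≪ P'` and `E_Q[H·ΔS] ≤ 0` turns a quasi-surely nonnegative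
`H·ΔS` into a nonnegative function with nonpositive `Q`-mean, so `H·ΔS = 0` `Q`-a.s., hence `P`-a.s.

Hard direction: fix `P`. The barycentres `E_Q[ΔS]` of the probability measures `Q` with
`P ≪ Q ≪ P' ∈ 𝒫` and `E_Q|ΔS| < ∞` form a convex set `S`, and since `ΔS ∈ N⊥(𝒫)` quasi-surely,
`E_Q[H·ΔS] = ⟪π H, E_Q ΔS⟫` for the orthogonal projection `π` onto `N⊥(𝒫)`. So it suffices that
some barycentre lies in the polar of the closed convex cone `C = C_𝓗(𝒫)`. If none does,
finite-dimensional separation and the bipolar theorem give `x ∈ C \ {0}` with `⟪x, w⟫ ≥ 0` on `S`.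
By NA, `x·ΔS < 0` with positive probability under some `P₂ ∈ 𝒫`: otherwise `x·ΔS = 0`
quasi-surely, i.e. `x ⊥ N⊥(𝒫) ∋ x`. Conditioning `P₂` on that event and Esscher-tilting by
`-|ΔS|` (to make `ΔS` integrable) yields a measure under which `E[x·ΔS] < 0`; mixing a small amount
of it into the Esscher tilt of `P` gives a point of `S` violating the separation.
-/

open MeasureTheory ProbabilityTheory Set Real
open scoped RealInnerProductSpace ENNReal Pointwise

noncomputable section

/-- `supp_𝒫(ΔS)`: the smallest closed set containing `ΔS` quasi-surely. -/
def qsSupport {Ω : Type*} [MeasurableSpace Ω] {d : ℕ} (Pfam : Set (Measure Ω))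
    (ΔS : Ω → EuclideanSpace ℝ (Fin d)) : Set (EuclideanSpace ℝ (Fin d)) :=
  ⋂₀ {A | IsClosed A ∧ ∀ P ∈ Pfam, ∀ᵐ ω ∂P, ΔS ω ∈ A}

/-- The generated projected cone `C_𝓗(𝒫)`. -/
def projCone {Ω : Type*} [MeasurableSpace Ω] {d : ℕ} (Pfam : Set (Measure Ω))
    (ΔS : Ω → EuclideanSpace ℝ (Fin d)) (𝓗 : Set (EuclideanSpace ℝ (Fin d))) :
    Set (EuclideanSpace ℝ (Fin d)) :=
  {x | ∃ c : ℝ, 0 ≤ c ∧ ∃ h ∈ 𝓗,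
    x = c • ((Submodule.orthogonalProjectionOnto (Submodule.span ℝ (qsSupport Pfam ΔS)) h :
      EuclideanSpace ℝ (Fin d)))}

end

section Separation

variable {E : Type*} [NormedAddCommGroup E] [InnerProductSpace ℝ E]

theorem exists_mem_sphere_forall_inner_pos_of_finite [CompleteSpace E] [Nontrivial E]
    {t : Set E} (ht : t.Finite) (h0 : (0 : E) ∉ convexHull ℝ t) :
    ∃ y ∈ Metric.sphere (0 : E) 1, ∀ v ∈ t, 0 < ⟪y, v⟫ := by
  obtain ⟨f, u, hfu, hf⟩ := geometric_hahn_banach_point_closed (convex_convexHull ℝ t)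
    (ht.isCompact_convexHull ℝ).isClosed h0
  set y := (InnerProductSpace.toDual ℝ E).symm f
  have hy : ∀ v ∈ t, 0 < ⟪y, v⟫ := fun v hv => by
    rw [InnerProductSpace.toDual_symm_apply]
    exact (map_zero f ▸ hfu).trans (hf v (subset_convexHull ℝ t hv))
  rcases eq_or_ne y 0 with hy0 | hy0
  · obtain ⟨z, hz⟩ := exists_norm_eq E zero_le_one
    exact ⟨z, by simpa using hz, fun v hv => by simpa [hy0] using hy v hv⟩
  · refine ⟨‖y‖⁻¹ • y, by simp [norm_smul, hy0], fun v hv => ?_⟩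
    rw [real_inner_smul_left]
    exact mul_pos (by positivity) (hy v hv)

theorem Convex.exists_ne_zero_forall_inner_nonneg [FiniteDimensional ℝ E] {s : Set E}
    (hs : Convex ℝ s) (hne : s.Nonempty) (h0 : (0 : E) ∉ s) :
    ∃ x ≠ 0, ∀ v ∈ s, 0 ≤ ⟪x, v⟫ := by
  have : Nontrivial E := by
    obtain ⟨v, hv⟩ := hne
    exact ⟨v, 0, ne_of_mem_of_not_mem hv h0⟩
  -- finite intersection property on the unit sphere
  obtain ⟨x, hx1, hx⟩ := (isCompact_sphere (0 : E) 1).inter_iInter_nonempty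
    (fun v : s => {y | 0 ≤ ⟪y, (v : E)⟫})
    (fun v => isClosed_le continuous_const (continuous_id.inner continuous_const)) fun u => by
      obtain ⟨y, hy1, hy⟩ := exists_mem_sphere_forall_inner_pos_of_finite
        (u.finite_toSet.image Subtype.val) fun h => h0 <| convexHull_min
          (by rintro _ ⟨v, -, rfl⟩; exact v.2) hs h
      exact ⟨y, hy1, mem_iInter₂.mpr fun v hv => (hy v (mem_image_of_mem _ hv)).le⟩
  exact ⟨x, ne_zero_of_mem_sphere one_ne_zero ⟨x, hx1⟩, fun v hv => mem_iInter.mp hx ⟨v, hv⟩⟩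

theorem ProperCone.exists_ne_zero_mem_forall_inner_nonneg [FiniteDimensional ℝ E]
    (K : ProperCone ℝ E) {S : Set E} (hS : Convex ℝ S) (hne : S.Nonempty)
    (hSK : ∀ w ∈ S, -w ∉ ProperCone.innerDual (K : Set E)) :
    ∃ x ∈ K, x ≠ 0 ∧ ∀ w ∈ S, 0 ≤ ⟪x, w⟫ := by
  set D := ProperCone.innerDual (K : Set E)
  obtain ⟨x, hx0, hx⟩ := (hS.add D.convex).exists_ne_zero_forall_inner_nonneg
    (hne.add ⟨0, D.zero_mem⟩) fun ⟨w, hw, c, hc, hwc⟩ => hSK w hw (by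
      rwa [← eq_neg_of_add_eq_zero_right hwc])
  have hxS : ∀ w ∈ S, 0 ≤ ⟪x, w⟫ := fun w hw => by
    simpa using hx _ (add_mem_add hw D.zero_mem)
  refine ⟨x, ?_, hx0, hxS⟩
  obtain ⟨w₀, hw₀⟩ := hne
  rw [← K.innerDual_innerDual, ProperCone.mem_innerDual]
  intro c hc
  by_contra! hneg
  rw [real_inner_comm] at hneg
  -- far enough along the ray `w₀ + r • c` the inner product with `x` becomes negative
  have key := hx _ (add_mem_add hw₀ (D.smul_mem hc (r := (⟪x, w₀⟫ + 1) / -⟪x, c⟫)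
    (div_nonneg (by linarith [hxS w₀ hw₀]) (by linarith))))
  have hray : (⟪x, w₀⟫ + 1) / -⟪x, c⟫ * ⟪x, c⟫ = -(⟪x, w₀⟫ + 1) := by
    rw [div_neg, neg_mul, div_mul_cancel₀ _ hneg.ne]
  rw [inner_add_right, real_inner_smul_right, hray] at key
  linarith

theorem exists_properCone_coe_eq {s : Set E} (hs : Convex ℝ s) (hcl : IsClosed s)
    (h0 : (0 : E) ∈ s) (hsmul : ∀ c : ℝ, 0 ≤ c → ∀ x ∈ s, c • x ∈ s) :
    ∃ K : ProperCone ℝ E, (K : Set E) = s :=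
  ⟨{ carrier := s
     zero_mem' := h0
     smul_mem' := fun c x hx => hsmul c c.2 x hx
     add_mem' := fun {x y} hx hy => by
       have hmid := hs hx hy (by norm_num : (0 : ℝ) ≤ 1 / 2) (by norm_num : (0 : ℝ) ≤ 1 / 2)
         (by norm_num)
       convert hsmul 2 zero_le_two _ hmid using 1
       module
     isClosed' := hcl }, rfl⟩

end Separation

section Measures

variable {Ω : Type*} [MeasurableSpace Ω] {μ ν : Measure Ω}

theorem integral_neg_of_ae_neg [NeZero μ] {f : Ω → ℝ} (hf : ∀ᵐ ω ∂μ, f ω < 0)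
    (hfi : Integrable f μ) : ∫ ω, f ω ∂μ < 0 := by
  have hsupp : ∀ᵐ ω ∂μ, ω ∈ Function.support fun ω => -f ω :=
    hf.mono fun ω hω => neg_ne_zero.mpr hω.ne
  have hpos : 0 < ∫ ω, -f ω ∂μ := by
    refine (integral_pos_iff_support_of_nonneg_ae (f := fun ω => -f ω)
      (hf.mono fun ω hω => by simp only [Pi.zero_apply]; linarith) hfi.neg).mpr ?_
    refine pos_iff_ne_zero.mpr fun hnull => ?_
    obtain ⟨ω, hω, hω'⟩ := (hsupp.and (measure_eq_zero_iff_ae_notMem.mp hnull)).exists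
    exact hω' hω
  rw [integral_neg] at hpos
  linarith

theorem integrable_exp_neg_norm {F : Type*} [NormedAddCommGroup F] [IsFiniteMeasure μ]
    {g : Ω → F} (hg : AEStronglyMeasurable g μ) : Integrable (fun ω => exp (-‖g ω‖)) μ :=
  Integrable.of_bound (by fun_prop) 1 <| .of_forall fun ω => by
    simp [abs_of_pos (exp_pos _), norm_nonneg (g ω)]

theorem integrable_tilted_neg_norm {F : Type*} [NormedAddCommGroup F] [NormedSpace ℝ F]
    [IsFiniteMeasure μ] {g : Ω → F} (hg : AEStronglyMeasurable g μ) :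
    Integrable g (μ.tilted fun ω => -‖g ω‖) := by
  rw [integrable_tilted_iff (integrable_exp_neg_norm hg)]
  refine Integrable.of_bound (by fun_prop) 1 <| .of_forall fun ω => ?_
  -- `t e^{-t} ≤ 1` for `t ≥ 0`
  rw [norm_smul, Real.norm_eq_abs, abs_of_pos (exp_pos _), exp_neg, inv_mul_le_iff₀ (exp_pos _),
    mul_one]
  linarith [add_one_le_exp ‖g ω‖]

theorem isProbabilityMeasure_ofReal_smul_add [IsProbabilityMeasure μ] [IsProbabilityMeasure ν]
    {a b : ℝ} (ha : 0 ≤ a) (hb : 0 ≤ b) (hab : a + b = 1) :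
    IsProbabilityMeasure (ENNReal.ofReal a • μ + ENNReal.ofReal b • ν) :=
  ⟨by simp [← ENNReal.ofReal_add ha hb, hab]⟩

theorem MeasureTheory.Integrable.ofReal_smul_add_measure {F : Type*} [NormedAddCommGroup F]
    {f : Ω → F} (hμ : Integrable f μ) (hν : Integrable f ν) (a b : ℝ) :
    Integrable f (ENNReal.ofReal a • μ + ENNReal.ofReal b • ν) :=
  (hμ.smul_measure ENNReal.ofReal_ne_top).add_measure (hν.smul_measure ENNReal.ofReal_ne_top)

theorem integral_ofReal_smul_add_measure {F : Type*} [NormedAddCommGroup F] [NormedSpace ℝ F]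
    {f : Ω → F} (hμ : Integrable f μ) (hν : Integrable f ν) {a b : ℝ} (ha : 0 ≤ a) (hb : 0 ≤ b) :
    ∫ ω, f ω ∂(ENNReal.ofReal a • μ + ENNReal.ofReal b • ν) =
      a • ∫ ω, f ω ∂μ + b • ∫ ω, f ω ∂ν := by
  rw [integral_add_measure (hμ.smul_measure ENNReal.ofReal_ne_top)
      (hν.smul_measure ENNReal.ofReal_ne_top), integral_smul_measure, integral_smul_measure,
    ENNReal.toReal_ofReal ha, ENNReal.toReal_ofReal hb]

end Measures

section Market

variable {Ω : Type*} [MeasurableSpace Ω] {d : ℕ} {Pfam : Set (Measure Ω)}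
  {ΔS : Ω → EuclideanSpace ℝ (Fin d)} {𝓗 : Set (EuclideanSpace ℝ (Fin d))}
  {P Q : Measure Ω}

def NoArbitrage (Pfam : Set (Measure Ω)) (ΔS : Ω → EuclideanSpace ℝ (Fin d))
    (𝓗 : Set (EuclideanSpace ℝ (Fin d))) : Prop :=
  ∀ H ∈ 𝓗, (∀ P ∈ Pfam, ∀ᵐ ω ∂P, 0 ≤ ⟪H, ΔS ω⟫) → ∀ P ∈ Pfam, ∀ᵐ ω ∂P, ⟪H, ΔS ω⟫ = 0

theorem ae_mem_qsSupport (hP : P ∈ Pfam) : ∀ᵐ ω ∂P, ΔS ω ∈ qsSupport Pfam ΔS := by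
  -- by second countability, countably many of the defining closed sets have the same intersection
  obtain ⟨T, hTc, hT, hTU⟩ := TopologicalSpace.isOpen_sUnion_countable
    (compl '' {A | IsClosed A ∧ ∀ P ∈ Pfam, ∀ᵐ ω ∂P, ΔS ω ∈ A})
    (by rintro _ ⟨A, hA, rfl⟩; exact hA.1.isOpen_compl)
  have hsupp : qsSupport Pfam ΔS = ⋂ U ∈ T, Uᶜ := by
    rw [qsSupport, ← compl_compl (⋂₀ _), compl_sInter, ← hTU, compl_sUnion, sInter_image]
  rw [hsupp]
  simp only [mem_iInter₂]
  refine (ae_ball_iff hTc).mpr fun U hU => ?_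
  obtain ⟨A, hA, rfl⟩ := hT hU
  simpa using hA.2 P hP

theorem ae_mem_span_qsSupport (hP : P ∈ Pfam) (hQP : Q ≪ P) :
    ∀ᵐ ω ∂Q, ΔS ω ∈ Submodule.span ℝ (qsSupport Pfam ΔS) :=
  hQP.ae_le ((ae_mem_qsSupport hP).mono fun _ hω => Submodule.subset_span hω)

theorem ae_inner_orthogonalProjectionOnto_span_qsSupport (hP : P ∈ Pfam) (hQP : Q ≪ P)
    (H : EuclideanSpace ℝ (Fin d)) :
    ∀ᵐ ω ∂Q, ⟪(Submodule.orthogonalProjectionOnto (Submodule.span ℝ (qsSupport Pfam ΔS)) H :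
      EuclideanSpace ℝ (Fin d)), ΔS ω⟫ = ⟪H, ΔS ω⟫ :=
  (ae_mem_span_qsSupport hP hQP).mono fun ω hω =>
    Submodule.inner_orthogonalProjectionOnto_eq_of_mem_right ⟨ΔS ω, hω⟩ H

theorem eq_zero_of_mem_span_qsSupport {x : EuclideanSpace ℝ (Fin d)}
    (hx : x ∈ Submodule.span ℝ (qsSupport Pfam ΔS))
    (hx0 : ∀ P ∈ Pfam, ∀ᵐ ω ∂P, ⟪x, ΔS ω⟫ = 0) : x = 0 := by
  have hsupp : qsSupport Pfam ΔS ⊆ (ℝ ∙ x)ᗮ :=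
    sInter_subset_of_mem ⟨Submodule.isClosed_orthogonal _, fun P hP =>
      (hx0 P hP).mono fun _ hω => Submodule.mem_orthogonal_singleton_iff_inner_right.mpr hω⟩
  exact inner_self_eq_zero.mp
    (Submodule.mem_orthogonal_singleton_iff_inner_right.mp (Submodule.span_le.mpr hsupp hx))

theorem zero_mem_projCone (h𝓗 : 𝓗.Nonempty) : 0 ∈ projCone Pfam ΔS 𝓗 := by
  obtain ⟨H, hH⟩ := h𝓗
  exact ⟨0, le_rfl, H, hH, (zero_smul _ _).symm⟩

theorem smul_mem_projCone {c : ℝ} (hc : 0 ≤ c) {x : EuclideanSpace ℝ (Fin d)}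
    (hx : x ∈ projCone Pfam ΔS 𝓗) : c • x ∈ projCone Pfam ΔS 𝓗 := by
  obtain ⟨c', hc', H, hH, rfl⟩ := hx
  exact ⟨c * c', mul_nonneg hc hc', H, hH, smul_smul c c' _⟩

theorem NoArbitrage.eq_zero_of_ae_inner_nonneg (hNA : NoArbitrage Pfam ΔS 𝓗)
    {x : EuclideanSpace ℝ (Fin d)} (hx : x ∈ projCone Pfam ΔS 𝓗)
    (hx_nonneg : ∀ P ∈ Pfam, ∀ᵐ ω ∂P, 0 ≤ ⟪x, ΔS ω⟫) : x = 0 := by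
  obtain ⟨c, hc, H, hH, rfl⟩ := hx
  rcases hc.eq_or_lt with rfl | hc
  · exact zero_smul _ _
  set p := (Submodule.orthogonalProjectionOnto (Submodule.span ℝ (qsSupport Pfam ΔS)) H :
    EuclideanSpace ℝ (Fin d))
  have hp : ∀ P ∈ Pfam, ∀ᵐ ω ∂P, ⟪p, ΔS ω⟫ = ⟪H, ΔS ω⟫ := fun P hP =>
    ae_inner_orthogonalProjectionOnto_span_qsSupport hP .rfl H
  have hH0 := hNA H hH fun P hP => by
    filter_upwards [hx_nonneg P hP, hp P hP] with ω hω hpω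
    rw [real_inner_smul_left, hpω] at hω
    exact nonneg_of_mul_nonneg_right hω hc
  have hp0 : p = 0 := eq_zero_of_mem_span_qsSupport (SetLike.coe_mem _) fun P hP => by
    filter_upwards [hH0 P hP, hp P hP] with ω hω hpω
    rw [hpω, hω]
  rw [hp0, smul_zero]

def admissibleMeasures (Pfam : Set (Measure Ω)) (ΔS : Ω → EuclideanSpace ℝ (Fin d))
    (P : Measure Ω) : Set (Measure Ω) :=
  {Q | IsProbabilityMeasure Q ∧ P ≪ Q ∧ (∃ P' ∈ Pfam, Q ≪ P') ∧ Integrable (fun ω => ‖ΔS ω‖) Q}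

theorem tilted_mem_admissibleMeasures (hmeas : Measurable ΔS) (hP : P ∈ Pfam)
    [IsProbabilityMeasure P] : (P.tilted fun ω => -‖ΔS ω‖) ∈ admissibleMeasures Pfam ΔS P :=
  have hexp := integrable_exp_neg_norm (μ := P) hmeas.aestronglyMeasurable
  ⟨isProbabilityMeasure_tilted hexp, absolutelyContinuous_tilted hexp,
    ⟨P, hP, tilted_absolutelyContinuous _ _⟩,
    (integrable_tilted_neg_norm hmeas.aestronglyMeasurable).norm⟩

theorem ofReal_smul_add_mem_admissibleMeasures
    (hconvex : ∀ P ∈ Pfam, ∀ P' ∈ Pfam, ∀ a b : ℝ≥0∞, a + b = 1 → a • P + b • P' ∈ Pfam)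
    {Q₁ Q₂ P₂ : Measure Ω} (hQ₁ : Q₁ ∈ admissibleMeasures Pfam ΔS P) [IsProbabilityMeasure Q₂]
    (hP₂ : P₂ ∈ Pfam) (hQ₂P₂ : Q₂ ≪ P₂) (hQ₂ : Integrable (fun ω => ‖ΔS ω‖) Q₂) {a b : ℝ}
    (ha : 0 < a) (hb : 0 ≤ b) (hab : a + b = 1) :
    ENNReal.ofReal a • Q₁ + ENNReal.ofReal b • Q₂ ∈ admissibleMeasures Pfam ΔS P := by
  obtain ⟨hQ₁p, hPQ₁, ⟨P₁, hP₁, hQ₁P₁⟩, hQ₁⟩ := hQ₁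
  refine ⟨isProbabilityMeasure_ofReal_smul_add ha.le hb hab,
    (hPQ₁.smul_right (by simpa using ha)).add_right _,
    ⟨_, hconvex P₁ hP₁ P₂ hP₂ _ _ ?_, (hQ₁P₁.smul _).add (hQ₂P₂.smul _)⟩,
    hQ₁.ofReal_smul_add_measure hQ₂ a b⟩
  rw [← ENNReal.ofReal_add ha.le hb, hab, ENNReal.ofReal_one]

theorem convex_integral_image_admissibleMeasures
    (hconvex : ∀ P ∈ Pfam, ∀ P' ∈ Pfam, ∀ a b : ℝ≥0∞, a + b = 1 → a • P + b • P' ∈ Pfam)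
    (hmeas : Measurable ΔS) (P : Measure Ω) :
    Convex ℝ ((fun Q => ∫ ω, ΔS ω ∂Q) '' admissibleMeasures Pfam ΔS P) := by
  rw [convex_iff_forall_pos]
  rintro _ ⟨Q₁, hQ₁, rfl⟩ _ ⟨Q₂, ⟨hQ₂p, -, ⟨P₂, hP₂, hQ₂P₂⟩, hQ₂⟩, rfl⟩ a b ha hb hab
  refine ⟨_, ofReal_smul_add_mem_admissibleMeasures hconvex hQ₁ hP₂ hQ₂P₂ hQ₂ ha hb.le hab, ?_⟩
  exact integral_ofReal_smul_add_measure
    ((integrable_norm_iff hmeas.aestronglyMeasurable).mp hQ₁.2.2.2)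
    ((integrable_norm_iff hmeas.aestronglyMeasurable).mp hQ₂) ha.le hb.le

theorem exists_absolutelyContinuous_integral_inner_neg (hmeas : Measurable ΔS)
    [IsFiniteMeasure P] {x : EuclideanSpace ℝ (Fin d)} (hx : P {ω | ⟪x, ΔS ω⟫ < 0} ≠ 0) :
    ∃ Q : Measure Ω, IsProbabilityMeasure Q ∧ Q ≪ P ∧ Integrable ΔS Q ∧
      ∫ ω, ⟪x, ΔS ω⟫ ∂Q < 0 := by
  set A := {ω | ⟪x, ΔS ω⟫ < 0}
  have hA : MeasurableSet A := measurableSet_lt (by fun_prop) measurable_const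
  have := cond_isProbabilityMeasure hx
  have hQ := isProbabilityMeasure_tilted
    (integrable_exp_neg_norm (μ := P[|A]) hmeas.aestronglyMeasurable)
  have hint : Integrable ΔS (P[|A].tilted fun ω => -‖ΔS ω‖) :=
    integrable_tilted_neg_norm hmeas.aestronglyMeasurable
  refine ⟨_, hQ, (tilted_absolutelyContinuous _ _).trans cond_absolutelyContinuous, hint,
    integral_neg_of_ae_neg ?_ (hint.const_inner x)⟩
  exact (tilted_absolutelyContinuous _ _).ae_le (ae_cond_mem hA)

theorem exists_pos_lt_one_mul_add_one_sub_mul_neg (a : ℝ) {b : ℝ} (hb : b < 0) :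
    ∃ l : ℝ, 0 < l ∧ l < 1 ∧ l * a + (1 - l) * b < 0 := by
  have hden : 0 < |a| - b + 1 := by linarith [abs_nonneg a]
  refine ⟨-b / (|a| - b + 1), div_pos (by linarith) hden,
    (div_lt_one hden).mpr (by linarith [abs_nonneg a]), ?_⟩
  have hl : -b / (|a| - b + 1) * (|a| - b + 1) = -b := div_mul_cancel₀ _ hden.ne'
  nlinarith [le_abs_self a, div_pos (neg_pos.mpr hb) hden]

theorem NoArbitrage.exists_admissible_forall_projCone_inner_integral_nonpos
    (hNA : NoArbitrage Pfam ΔS 𝓗) (hprob : ∀ P ∈ Pfam, IsProbabilityMeasure P)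
    (hconvex : ∀ P ∈ Pfam, ∀ P' ∈ Pfam, ∀ a b : ℝ≥0∞, a + b = 1 → a • P + b • P' ∈ Pfam)
    (hmeas : Measurable ΔS) (K : ProperCone ℝ (EuclideanSpace ℝ (Fin d)))
    (hK : (K : Set (EuclideanSpace ℝ (Fin d))) = projCone Pfam ΔS 𝓗) (hP : P ∈ Pfam) :
    ∃ Q ∈ admissibleMeasures Pfam ΔS P, ∀ x ∈ projCone Pfam ΔS 𝓗, ⟪x, ∫ ω, ΔS ω ∂Q⟫ ≤ 0 := by
  have := hprob P hP
  by_contra! hnone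
  obtain ⟨x, hxK, hx0, hxS⟩ := K.exists_ne_zero_mem_forall_inner_nonneg
    (convex_integral_image_admissibleMeasures hconvex hmeas P)
    ⟨_, _, tilted_mem_admissibleMeasures hmeas hP, rfl⟩ <| by
      rintro _ ⟨Q, hQ, rfl⟩ hdual
      obtain ⟨x, hx, hxQ⟩ := hnone Q hQ
      have : 0 ≤ ⟪x, -∫ ω, ΔS ω ∂Q⟫ := hdual (hK ▸ hx)
      rw [inner_neg_right] at this
      linarith
  obtain ⟨P₂, hP₂, hP₂x⟩ : ∃ P₂ ∈ Pfam, P₂ {ω | ⟪x, ΔS ω⟫ < 0} ≠ 0 := by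
    by_contra! h
    exact hx0 (hNA.eq_zero_of_ae_inner_nonneg (hK ▸ hxK) fun P' hP' => by
      simpa [ae_iff] using h P' hP')
  have := hprob P₂ hP₂
  obtain ⟨Q₂, hQ₂p, hQ₂P₂, hQ₂, hQ₂x⟩ :=
    exists_absolutelyContinuous_integral_inner_neg hmeas hP₂x
  set Q₀ := P.tilted fun ω => -‖ΔS ω‖
  have hQ₀ : Q₀ ∈ admissibleMeasures Pfam ΔS P := tilted_mem_admissibleMeasures hmeas hP
  have hQ₀i := (integrable_norm_iff hmeas.aestronglyMeasurable).mp hQ₀.2.2.2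
  obtain ⟨l, hl0, hl1, hl⟩ := exists_pos_lt_one_mul_add_one_sub_mul_neg
    (∫ ω, ⟪x, ΔS ω⟫ ∂Q₀) hQ₂x
  have hmix : 0 ≤ ⟪x, ∫ ω, ΔS ω ∂(ENNReal.ofReal l • Q₀ + ENNReal.ofReal (1 - l) • Q₂)⟫ :=
    hxS _ ⟨_, ofReal_smul_add_mem_admissibleMeasures hconvex hQ₀ hP₂ hQ₂P₂ hQ₂.norm
      hl0 (sub_nonneg.mpr hl1.le) (add_sub_cancel _ _), rfl⟩
  rw [integral_ofReal_smul_add_measure hQ₀i hQ₂ hl0.le (sub_nonneg.mpr hl1.le), inner_add_right,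
    real_inner_smul_right, real_inner_smul_right, ← integral_inner hQ₀i,
    ← integral_inner hQ₂] at hmix
  linarith

theorem integral_inner_nonpos_of_forall_projCone {P' : Measure Ω} (hP' : P' ∈ Pfam)
    (hQP' : Q ≪ P') (hQ : Integrable ΔS Q)
    (hQC : ∀ x ∈ projCone Pfam ΔS 𝓗, ⟪x, ∫ ω, ΔS ω ∂Q⟫ ≤ 0) {H : EuclideanSpace ℝ (Fin d)}
    (hH : H ∈ 𝓗) : ∫ ω, ⟪H, ΔS ω⟫ ∂Q ≤ 0 := by
  rw [← integral_congr_ae (ae_inner_orthogonalProjectionOnto_span_qsSupport hP' hQP' H),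
    integral_inner hQ]
  exact hQC _ ⟨1, zero_le_one, H, hH, (one_smul _ _).symm⟩

theorem noArbitrage_of_forall_exists_integral_inner_nonpos (hmeas : Measurable ΔS)
    (h : ∀ P ∈ Pfam, ∃ Q : Measure Ω, IsProbabilityMeasure Q ∧ P ≪ Q ∧
      (∃ P' ∈ Pfam, Q ≪ P') ∧ Integrable (fun ω => ‖ΔS ω‖) Q ∧
      ∀ H ∈ 𝓗, ∫ ω, ⟪H, ΔS ω⟫ ∂Q ≤ 0) :
    NoArbitrage Pfam ΔS 𝓗 := by
  intro H hH hH_nonneg P hP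
  obtain ⟨Q, -, hPQ, ⟨P', hP', hQP'⟩, hQ, hQH⟩ := h P hP
  have hQ_nonneg : 0 ≤ᵐ[Q] fun ω => ⟪H, ΔS ω⟫ := hQP'.ae_le (hH_nonneg P' hP')
  have hzero := (integral_eq_zero_iff_of_nonneg_ae hQ_nonneg
    (((integrable_norm_iff hmeas.aestronglyMeasurable).mp hQ).const_inner H)).mp
    (le_antisymm (hQH H hH) (integral_nonneg_of_ae hQ_nonneg))
  exact hPQ.ae_le hzero

end Market

theorem stmt9_general {Ω : Type*} [MeasurableSpace Ω]
    {d : ℕ} (Pfam : Set (Measure Ω))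
    (hprob : ∀ P ∈ Pfam, IsProbabilityMeasure P)
    (hconvex : ∀ P ∈ Pfam, ∀ P' ∈ Pfam, ∀ a b : ℝ≥0∞, a + b = 1 → a • P + b • P' ∈ Pfam)
    (ΔS : Ω → EuclideanSpace ℝ (Fin d)) (hmeas : Measurable ΔS)
    (𝓗 : Set (EuclideanSpace ℝ (Fin d)))
    (hCconvex : Convex ℝ (projCone Pfam ΔS 𝓗))
    (hCclosed : IsClosed (projCone Pfam ΔS 𝓗)) :
    (∀ H ∈ 𝓗, (∀ P ∈ Pfam, ∀ᵐ ω ∂P, 0 ≤ ⟪H, ΔS ω⟫) →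
        (∀ P ∈ Pfam, ∀ᵐ ω ∂P, ⟪H, ΔS ω⟫ = 0)) ↔
    (∀ P ∈ Pfam, ∃ Q : Measure Ω, IsProbabilityMeasure Q ∧ P ≪ Q ∧
        (∃ P' ∈ Pfam, Q ≪ P') ∧ Integrable (fun ω => ‖ΔS ω‖) Q ∧
        ∀ H ∈ 𝓗, ∫ ω, ⟪H, ΔS ω⟫ ∂Q ≤ 0) := by
  show NoArbitrage Pfam ΔS 𝓗 ↔ _
  refine ⟨fun hNA P hP => ?_, noArbitrage_of_forall_exists_integral_inner_nonpos hmeas⟩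
  obtain ⟨Q, ⟨hQp, hPQ, ⟨P', hP', hQP'⟩, hQ⟩, hQC⟩ :
      ∃ Q ∈ admissibleMeasures Pfam ΔS P, ∀ x ∈ projCone Pfam ΔS 𝓗, ⟪x, ∫ ω, ΔS ω ∂Q⟫ ≤ 0 := by
    rcases 𝓗.eq_empty_or_nonempty with rfl | h𝓗
    · have := hprob P hP
      exact ⟨_, tilted_mem_admissibleMeasures hmeas hP, by simp [projCone]⟩
    obtain ⟨K, hK⟩ := exists_properCone_coe_eq hCconvex hCclosed (zero_mem_projCone h𝓗)
      fun c hc x hx => smul_mem_projCone hc hx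
    exact hNA.exists_admissible_forall_projCone_inner_integral_nonpos hprob hconvex hmeas K hK hP
  exact ⟨Q, hQp, hPQ, ⟨P', hP', hQP'⟩, hQ, fun H hH => integral_inner_nonpos_of_forall_projCone hP'
    hQP' ((integrable_norm_iff hmeas.aestronglyMeasurable).mp hQ) hQC hH⟩

/-- Theorem 2.1: the one-period robust FTAP with convex closed portfolio
constraints. NA(𝒫) holds iff every `P ∈ 𝒫` is dominated by some `Q ⋘ 𝒫` with
`E_Q|ΔS| < ∞` and `E_Q[H·ΔS] ≤ 0` for all `H ∈ 𝓗`. -/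
theorem stmt9 {Ω : Type*} [TopologicalSpace Ω] [PolishSpace Ω] [MeasurableSpace Ω] [BorelSpace Ω]
    {d : ℕ} (Pfam : Set (Measure Ω))
    (hprob : ∀ P ∈ Pfam, IsProbabilityMeasure P)
    (hconvex : ∀ P ∈ Pfam, ∀ P' ∈ Pfam, ∀ a b : ℝ≥0∞, a + b = 1 → a • P + b • P' ∈ Pfam)
    (ΔS : Ω → EuclideanSpace ℝ (Fin d)) (hmeas : Measurable ΔS)
    (𝓗 : Set (EuclideanSpace ℝ (Fin d)))
    (hCconvex : Convex ℝ (projCone Pfam ΔS 𝓗))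
    (hCclosed : IsClosed (projCone Pfam ΔS 𝓗)) :
    (∀ H ∈ 𝓗, (∀ P ∈ Pfam, ∀ᵐ ω ∂P, 0 ≤ ⟪H, ΔS ω⟫) →
        (∀ P ∈ Pfam, ∀ᵐ ω ∂P, ⟪H, ΔS ω⟫ = 0)) ↔
    (∀ P ∈ Pfam, ∃ Q : Measure Ω, IsProbabilityMeasure Q ∧ P ≪ Q ∧
        (∃ P' ∈ Pfam, Q ≪ P') ∧ Integrable (fun ω => ‖ΔS ω‖) Q ∧
        ∀ H ∈ 𝓗, ∫ ω, ⟪H, ΔS ω⟫ ∂Q ≤ 0) :=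
  stmt9_general Pfam hprob hconvex ΔS hmeas 𝓗 hCconvex hCclosed
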